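/- Let X be a strongly connected component of a deterministic tree automaton not replicated by any accepting loop, and let ρ be an accepting run. Then the subtree ρ_X of the run, consisting of nodes labeled by a state of X or having a descendant labeled by a state of X, has only finitely many branches. -/

import Mathlib

/-- One-step transition relation of a deterministic tree automaton. -/
def Step {Q A : Type*} (δ : Q → A → Fin 2 → Q) (p q : Q) : Prop := ∃ σ d, δ p σ d = q

/-- `ρ` is a run of the automaton `δ` on the input tree `t` (starting from an
arbitrary chosen state at the root). -/
def IsRun {Q A : Type*} (δ : Q → A → Fin 2 → Q) (t : List (Fin 2) → A)
    (ρ : List (Fin 2) → Q) : Prop :=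
  ∀ v d, ρ (v ++ [d]) = δ (ρ v) (t v) d

/-- The node at depth `n` on the branch `b` of the full binary tree. -/
def node2 (b : ℕ → Fin 2) (n : ℕ) : List (Fin 2) := List.ofFn fun i : Fin n => b i

/-- `r` occurs infinitely often in the sequence `f`. -/
def InfOcc (f : ℕ → ℕ) (r : ℕ) : Prop := ∀ m, ∃ n, m ≤ n ∧ f n = r

/-- The parity condition on one branch: the highest rank occurring infinitely
often is even. -/
def AcceptingBranch (f : ℕ → ℕ) : Prop :=
  ∃ r, Even r ∧ InfOcc f r ∧ ∀ r', InfOcc f r' → r' ≤ r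

/-- A run is accepting if every infinite branch satisfies the parity condition. -/
def Accepting {Q : Type*} (rank : Q → ℕ) (ρ : List (Fin 2) → Q) : Prop :=
  ∀ b : ℕ → Fin 2, AcceptingBranch fun n => rank (ρ (node2 b n))

/-- A state is productive if it occurs in some accepting run. -/
def Productive {Q A : Type*} (δ : Q → A → Fin 2 → Q) (rank : Q → ℕ) (p : Q) : Prop :=
  ∃ t ρ, IsRun δ t ρ ∧ Accepting rank ρ ∧ ∃ v, ρ v = p

/-- A loop (cycle) in the automaton, presented as an `m`-periodic sequence of
states connected by transitions. -/
def IsCycle {Q A : Type*} (δ : Q → A → Fin 2 → Q) (c : ℕ → Q) (m : ℕ) : Prop :=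
  0 < m ∧ (∀ n, c (n + m) = c n) ∧ ∀ n, Step δ (c n) (c (n + 1))

/-- The maximal rank on the loop `c` is even (the loop is accepting). -/
def MaxRankEven {Q : Type*} (rank : Q → ℕ) (c : ℕ → Q) : Prop :=
  ∃ r, Even r ∧ (∃ n, rank (c n) = r) ∧ ∀ n, rank (c n) ≤ r

/-- The maximal rank on the loop `c` is odd (the loop is rejecting). -/
def MaxRankOdd {Q : Type*} (rank : Q → ℕ) (c : ℕ → Q) : Prop :=
  ∃ r, Odd r ∧ (∃ n, rank (c n) = r) ∧ ∀ n, rank (c n) ≤ r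

/-- Reachability along transitions. -/
def Reaches {Q A : Type*} (δ : Q → A → Fin 2 → Q) : Q → Q → Prop :=
  Relation.ReflTransGen (Step δ)

/-- `p` is replicated by an accepting loop: there is an accepting loop `c`, whose
transition at `c 0` reads `σ` in direction `d₀`, and a path starting with the
transition on `(σ, d₁)`, `d₁ ≠ d₀`, leading from `c 0` to `p`. -/
def ReplicatedByAccLoop {Q A : Type*} (δ : Q → A → Fin 2 → Q) (rank : Q → ℕ)
    (p : Q) : Prop :=
  ∃ (c : ℕ → Q) (m : ℕ) (σ : A) (d₀ d₁ : Fin 2),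
    IsCycle δ c m ∧ MaxRankEven rank c ∧ δ (c 0) σ d₀ = c 1 ∧ d₀ ≠ d₁ ∧
      Reaches δ (δ (c 0) σ d₁) p

/-- `x` and `y` lie in the same strongly connected component: each reaches the
other. -/
def SameSCC {Q : Type*} (G : Q → Q → Prop) (x y : Q) : Prop :=
  Relation.ReflTransGen G x y ∧ Relation.ReflTransGen G y x

/-
Only finitely many nodes of `ρ_X` are branching: otherwise Kőnig's lemma gives a branch of `ρ`
off which `ρ_X` branches infinitely often. Some state `q` sits at infinitely many of these
branch-off points, and as the branch is accepting, two of them, late enough, enclose a segment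
whose ranks are bounded by the largest recurring rank `r`, which is even and occurs in between.
That segment is an accepting loop at `q`, and the state of `X` reached off the branch is
replicated by it. Finitely many branching nodes leave finitely many maximal chains, since a
maximal chain is determined by the directions it takes at them.
-/

open Filter

section PrefixTree

variable {α Q : Type*}

def IsPrefixClosed (S : Set (List α)) : Prop :=
  ∀ ⦃v⦄, v ∈ S → ∀ ⦃u⦄, u <+: v → u ∈ S

def branchingNodes (S : Set (List α)) : Set (List α) :=
  {u | ∃ d₁ d₂, d₁ ≠ d₂ ∧ u ++ [d₁] ∈ S ∧ u ++ [d₂] ∈ S}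

theorem List.exists_fork_of_not_prefix_of_not_prefix :
    ∀ {v₁ v₂ : List α}, ¬ v₁ <+: v₂ → ¬ v₂ <+: v₁ →
      ∃ u d₁ d₂, d₁ ≠ d₂ ∧ u ++ [d₁] <+: v₁ ∧ u ++ [d₂] <+: v₂
  | [], _, h, _ => absurd List.nil_prefix h
  | _, [], _, h => absurd List.nil_prefix h
  | x :: v₁, y :: v₂, h₁, h₂ => by
    by_cases hxy : x = y
    · subst hxy
      obtain ⟨u, d₁, d₂, hne, hu₁, hu₂⟩ := exists_fork_of_not_prefix_of_not_prefix
        (fun h => h₁ (List.cons_prefix_cons.2 ⟨rfl, h⟩))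
        (fun h => h₂ (List.cons_prefix_cons.2 ⟨rfl, h⟩))
      exact ⟨x :: u, d₁, d₂, hne, List.cons_prefix_cons.2 ⟨rfl, hu₁⟩,
        List.cons_prefix_cons.2 ⟨rfl, hu₂⟩⟩
    · exact ⟨[], x, y, hxy, by simp, by simp⟩

theorem IsMaxChain.mem_of_forall_comparable {β : Type*} {r : β → β → Prop} {P : Set β}
    (hP : IsMaxChain r P) {a : β} (ha : ∀ b ∈ P, a ≠ b → r a b ∨ r b a) : a ∈ P := by
  rw [hP.2 (hP.1.insert ha) (Set.subset_insert a P)]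
  exact Set.mem_insert a P

theorem IsMaxChain.mem_of_prefix {S : Set (List α)} {P : Set S}
    (hP : IsMaxChain (fun a b : S => a.1 <+: b.1) P) {u v : S} (hv : v ∈ P) (hu : u.1 <+: v.1) :
    u ∈ P := by
  refine hP.mem_of_forall_comparable fun y hy _ => ?_
  rcases eq_or_ne y v with rfl | hyv
  · exact Or.inl hu
  · rcases hP.1 hy hv hyv with h | h
    · exact List.prefix_or_prefix_of_prefix hu h
    · exact Or.inl (hu.trans h)

theorem finite_setOf_isMaxChain_of_finite_branchingNodes [Finite α] {S : Set (List α)}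
    (hS : IsPrefixClosed S) (hfin : (branchingNodes S).Finite) :
    {P : Set S | IsMaxChain (fun a b : S => a.1 <+: b.1) P}.Finite := by
  let directions (P : Set S) : Set (List α × α) :=
    {e | e.1 ∈ branchingNodes S ∧ e.1 ++ [e.2] ∈ Subtype.val '' P}
  refine Set.Finite.of_injOn (f := directions) (t := {E | E ⊆ branchingNodes S ×ˢ Set.univ})
    (fun P _ e he => ⟨he.1, trivial⟩) ?_ (hfin.prod Set.finite_univ).finite_subsets
  intro P₁ hP₁ P₂ hP₂ hdir
  refine hP₁.2 hP₂.1 fun v hv => hP₂.mem_of_forall_comparable fun y hy _ => ?_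
  by_contra hinc
  push Not at hinc
  obtain ⟨u, d₁, d₂, hne, h₁, h₂⟩ := List.exists_fork_of_not_prefix_of_not_prefix hinc.1 hinc.2
  have hu₁ : u ++ [d₁] ∈ S := hS v.2 h₁
  have hu₂ : u ++ [d₂] ∈ S := hS y.2 h₂
  have hdir₁ : (u, d₁) ∈ directions P₂ := by
    rw [← hdir]
    exact ⟨⟨d₁, d₂, hne, hu₁, hu₂⟩, ⟨_, hu₁⟩, hP₁.mem_of_prefix hv h₁, rfl⟩
  obtain ⟨-, a, ha, hau⟩ := hdir₁
  have hb : (⟨u ++ [d₂], hu₂⟩ : S) ∈ P₂ := hP₂.mem_of_prefix hy h₂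
  simp only at hau
  have hab : a ≠ ⟨u ++ [d₂], hu₂⟩ := fun h => hne (by simpa [hau] using congrArg Subtype.val h)
  rcases hP₂.1 ha hb hab with h | h <;> simp [hau, hne, hne.symm] at h

theorem exists_append_singleton_infinite [Finite α] {S : Set (List α)} {v : List α}
    (h : {w ∈ S | v <+: w}.Infinite) : ∃ d, {w ∈ S | v ++ [d] <+: w}.Infinite := by
  by_contra! hfin
  refine h (((Set.finite_iUnion hfin).insert v).subset ?_)
  rintro w ⟨hw, s, rfl⟩
  cases s with
  | nil => simp
  | cons d s => exact Or.inr (Set.mem_iUnion.2 ⟨d, hw, s, by simp⟩)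

def runSubtree (ρ : List α → Q) (X : Set Q) : Set (List α) :=
  {v | ∃ w, ρ (v ++ w) ∈ X}

theorem isPrefixClosed_runSubtree (ρ : List α → Q) (X : Set Q) :
    IsPrefixClosed (runSubtree ρ X) := by
  rintro v ⟨w, hw⟩ u ⟨s, rfl⟩
  exact ⟨s ++ w, by rwa [← List.append_assoc]⟩

end PrefixTree

section BinaryTree

theorem node2_succ (b : ℕ → Fin 2) (n : ℕ) : node2 b (n + 1) = node2 b n ++ [b n] := by
  simp only [node2, List.ofFn_succ', List.concat_eq_append, Fin.val_castSucc, Fin.val_last]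

theorem length_node2 (b : ℕ → Fin 2) (n : ℕ) : (node2 b n).length = n := by
  simp [node2]

theorem exists_node2_forall_infinite {S : Set (List (Fin 2))} (hS : S.Infinite) :
    ∃ b : ℕ → Fin 2, ∀ n, {w ∈ S | node2 b n <+: w}.Infinite := by
  have hstep (v : List (Fin 2)) :
      ∃ d, {w ∈ S | v <+: w}.Infinite → {w ∈ S | v ++ [d] <+: w}.Infinite := by
    by_cases h : {w ∈ S | v <+: w}.Infinite
    · exact (exists_append_singleton_infinite h).imp fun _ hd _ => hd
    · exact ⟨0, fun h' => absurd h' h⟩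
  choose next hnext using hstep
  let path (n : ℕ) : List (Fin 2) := Nat.rec [] (fun _ v => v ++ [next v]) n
  have hpath (n : ℕ) : node2 (fun k => next (path k)) n = path n := by
    induction n with
    | zero => rfl
    | succ n ih => rw [node2_succ, ih]
  refine ⟨fun k => next (path k), fun n => ?_⟩
  rw [hpath]
  induction n with
  | zero => simpa [path] using hS
  | succ n ih => exact hnext _ ih

theorem eq_node2_or_exists_branchOff (b : ℕ → Fin 2) {n : ℕ} {v : List (Fin 2)}
    (hv : node2 b n <+: v) :
    v = node2 b v.length ∨ ∃ k, n ≤ k ∧ ∃ d ≠ b k, node2 b k ++ [d] <+: v := by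
  induction v using List.reverseRecOn with
  | nil => exact Or.inl rfl
  | append_singleton v x ih =>
    rcases List.prefix_concat_iff.1 hv with h | h
    · exact Or.inl (by rw [← h, length_node2])
    rcases ih h with hvb | ⟨k, hk, d, hd, hkv⟩
    · by_cases hx : x = b v.length
      · left
        rw [List.length_append, List.length_singleton, node2_succ, ← hvb, hx]
      · refine Or.inr ⟨v.length, ?_, x, hx, by rw [← hvb]⟩
        simpa [length_node2] using h.length_le
    · exact Or.inr ⟨k, hk, d, hd, hkv.trans (List.prefix_append v [x])⟩

theorem frequently_branchOff {S : Set (List (Fin 2))} (hS : IsPrefixClosed S)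
    {b : ℕ → Fin 2} (hb : ∀ n, ∃ v ∈ branchingNodes S, node2 b n <+: v) :
    ∃ᶠ k in atTop, ∃ d ≠ b k, node2 b k ++ [d] ∈ S := by
  refine frequently_atTop.2 fun n => ?_
  obtain ⟨v, ⟨d₁, d₂, hne, h₁, h₂⟩, hv⟩ := hb n
  rcases eq_node2_or_exists_branchOff b hv with hvb | ⟨k, hk, d, hd, hkv⟩
  · refine ⟨v.length, by simpa [length_node2] using hv.length_le, ?_⟩
    rw [hvb] at h₁ h₂
    by_cases hd₁ : d₁ = b v.length
    · exact ⟨d₂, hd₁ ▸ hne.symm, h₂⟩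
    · exact ⟨d₁, hd₁, h₁⟩
  · exact ⟨k, hk, d, hd, hS h₁ (hkv.trans (List.prefix_append v [d₁]))⟩

end BinaryTree

theorem Filter.Frequently.exists_frequently_eq {ι β : Type*} [Finite β] {l : Filter ι}
    {p : ι → Prop} (h : ∃ᶠ i in l, p i) (f : ι → β) : ∃ b, ∃ᶠ i in l, p i ∧ f i = b := by
  by_contra! hb
  exact h ((eventually_all.2 hb).mono fun i hi hpi => hi (f i) hpi rfl)

theorem eventually_le_of_forall_infOcc_le {f : ℕ → ℕ} (hf : (Set.range f).Finite) {r : ℕ}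
    (hr : ∀ r', InfOcc f r' → r' ≤ r) : ∀ᶠ n in atTop, f n ≤ r := by
  have hval : ∀ x ∈ Set.range f, ∀ᶠ n in atTop, f n = x → x ≤ r := by
    intro x _
    by_cases hx : ∃ᶠ n in atTop, f n = x
    · exact Eventually.of_forall fun _ _ => hr x (frequently_atTop.1 hx)
    · exact (not_frequently.1 hx).mono fun _ hn h => absurd h hn
  exact ((eventually_all_finite hf).2 hval).mono fun n hn => hn (f n) ⟨n, rfl⟩ rfl

section Automaton

variable {Q A : Type*} {δ : Q → A → Fin 2 → Q}

theorem IsRun.reaches {t : List (Fin 2) → A} {ρ : List (Fin 2) → Q} (hrun : IsRun δ t ρ)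
    (v w : List (Fin 2)) : Reaches δ (ρ v) (ρ (v ++ w)) := by
  induction w using List.reverseRecOn with
  | nil => rw [List.append_nil]; exact Relation.ReflTransGen.refl
  | append_singleton w d ih =>
    rw [← List.append_assoc]
    exact ih.tail ⟨t (v ++ w), d, (hrun (v ++ w) d).symm⟩

theorem IsRun.apply_node2_succ {t : List (Fin 2) → A} {ρ : List (Fin 2) → Q} (hrun : IsRun δ t ρ)
    (b : ℕ → Fin 2) (n : ℕ) :
    ρ (node2 b (n + 1)) = δ (ρ (node2 b n)) (t (node2 b n)) (b n) := by
  rw [node2_succ]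
  exact hrun _ _

theorem mod_succ_eq_of_periodic {s : ℕ → Q} {i m : ℕ} (hm : 0 < m) (hper : s (i + m) = s i)
    (n : ℕ) : s (i + (n + 1) % m) = s (i + n % m + 1) := by
  rw [← Nat.mod_add_mod]
  have := Nat.mod_lt n hm
  rcases (show n % m + 1 < m ∨ n % m + 1 = m by omega) with h | h
  · rw [Nat.mod_eq_of_lt h, Nat.add_assoc]
  · rw [h, Nat.mod_self, Nat.add_zero, Nat.add_assoc, h, hper]

theorem replicatedByAccLoop_of_lasso (rank : Q → ℕ) {s : ℕ → Q} {σ : ℕ → A} {e : ℕ → Fin 2}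
    (hs : ∀ n, s (n + 1) = δ (s n) (σ n) (e n)) {i m r : ℕ} (hm : 0 < m)
    (hper : s (i + m) = s i) (hr : Even r)
    (hle : ∀ n, i ≤ n → n < i + m → rank (s n) ≤ r)
    (hj : ∃ j, i ≤ j ∧ j < i + m ∧ rank (s j) = r) {d : Fin 2} (hd : d ≠ e i) {p : Q}
    (hp : Reaches δ (δ (s i) (σ i) d) p) : ReplicatedByAccLoop δ rank p := by
  have hsucc := mod_succ_eq_of_periodic hm hper
  have hc0 : s (i + 0 % m) = s i := by rw [Nat.zero_mod, Nat.add_zero]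
  refine ⟨fun n => s (i + n % m), m, σ i, e i, d, ⟨hm, fun n => by simp, fun n => ?_⟩,
    ⟨r, hr, ?_, fun n => hle _ (Nat.le_add_right i _) (by have := Nat.mod_lt n hm; omega)⟩,
    ?_, hd.symm, by simpa only [hc0] using hp⟩
  · exact ⟨σ (i + n % m), e (i + n % m), by dsimp only; rw [hsucc, hs]⟩
  · obtain ⟨j, hij, hjm, hj⟩ := hj
    exact ⟨j - i, by dsimp only; rwa [Nat.mod_eq_of_lt (by omega), Nat.add_sub_cancel' hij]⟩
  · dsimp only
    rw [hsucc, hc0, Nat.zero_mod, Nat.add_zero, hs]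

theorem finite_branchingNodes_runSubtree [Finite Q] {rank : Q → ℕ} {X : Set Q}
    (hnrep : ∀ p ∈ X, ¬ ReplicatedByAccLoop δ rank p) {t : List (Fin 2) → A}
    {ρ : List (Fin 2) → Q} (hrun : IsRun δ t ρ) (hacc : Accepting rank ρ) :
    (branchingNodes (runSubtree ρ X)).Finite := by
  by_contra hinf
  obtain ⟨b, hb⟩ := exists_node2_forall_infinite hinf
  have hoff : ∃ᶠ k in atTop, ∃ d ≠ b k, node2 b k ++ [d] ∈ runSubtree ρ X :=
    frequently_branchOff (isPrefixClosed_runSubtree ρ X) fun n => (hb n).nonempty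
  obtain ⟨r, hr, hrInf, hrMax⟩ := hacc b
  obtain ⟨N, hN⟩ := eventually_atTop.1 <| eventually_le_of_forall_infOcc_le
    ((Set.finite_range rank).subset (Set.range_comp_subset_range _ rank)) hrMax
  obtain ⟨q, hq⟩ := hoff.exists_frequently_eq fun n => ρ (node2 b n)
  obtain ⟨i, hiN, ⟨d, hd, w, hw⟩, hiq⟩ := frequently_atTop.1 hq N
  obtain ⟨j, hij, hj⟩ := hrInf i
  obtain ⟨i', hji', -, hi'q⟩ := frequently_atTop.1 hq (j + 1)
  refine hnrep _ hw (replicatedByAccLoop_of_lasso rank (hrun.apply_node2_succ b) (i := i)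
    (m := i' - i) (by omega) ?_ hr (fun n hn _ => hN n (by omega)) ⟨j, hij, by omega, hj⟩ hd ?_)
  · rw [Nat.add_sub_cancel' (by omega), hiq, hi'q]
  · rw [← hrun]
    exact hrun.reaches _ w

end Automaton

theorem rhoX_finitely_many_branches_general {Q A : Type*} [Fintype Q]
    (δ : Q → A → Fin 2 → Q) (rank : Q → ℕ)
    (X : Set Q)
    (hnrep : ∀ p ∈ X, ¬ ReplicatedByAccLoop δ rank p)
    (t : List (Fin 2) → A) (ρ : List (Fin 2) → Q)
    (hrun : IsRun δ t ρ) (hacc : Accepting rank ρ) :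
    {P : Set {v : List (Fin 2) // ∃ w, ρ (v ++ w) ∈ X} |
      IsMaxChain (fun a b => a.1 <+: b.1) P}.Finite :=
  finite_setOf_isMaxChain_of_finite_branchingNodes (isPrefixClosed_runSubtree ρ X)
    (finite_branchingNodes_runSubtree hnrep hrun hacc)

/-- If `X` is a strongly connected component of the automaton, no state of which
is replicated by an accepting loop, and `ρ` is an accepting run, then the
subtree `ρ_X` of nodes having a descendant (or themselves) labeled by a state of
`X` has only finitely many branches (maximal chains under the prefix order). -/
theorem rhoX_finitely_many_branches {Q A : Type*} [Fintype Q]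
    (δ : Q → A → Fin 2 → Q) (rank : Q → ℕ)
    (X : Set Q) (hX : ∃ q₀, X = {x | SameSCC (Step δ) x q₀})
    (hnrep : ∀ p ∈ X, ¬ ReplicatedByAccLoop δ rank p)
    (t : List (Fin 2) → A) (ρ : List (Fin 2) → Q)
    (hrun : IsRun δ t ρ) (hacc : Accepting rank ρ) :
    {P : Set {v : List (Fin 2) // ∃ w, ρ (v ++ w) ∈ X} |
      IsMaxChain (fun a b => a.1 <+: b.1) P}.Finite :=
  rhoX_finitely_many_branches_general δ rank X hnrep t ρ hrun hacc
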